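/- Fix an integer K ≥ 1, γ < 0, and 1 < p < 5. Set ℓ = γ²/K² and, for ω ∈ (0, ℓ), b_ω = arctanh(√(ω/ℓ)) and m(ω) = K ∫₀^∞ (((p+1)ω/2)^{1/(p−1)} (sinh(((p−1)√ω/2)x + b_ω))^{−2/(p−1)})² dx. Then: (i) m(ω) is finite and strictly positive for every ω ∈ (0, ℓ); (ii) there exists μ < ∞ such that m(ω) < μ for all ω ∈ (0, ℓ); (iii) m is strictly decreasing on (0, ℓ); and (iv) m(ω) → 0 as ω → ℓ⁻. -/

import Mathlib

open MeasureTheory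

/-- The inverse hyperbolic tangent, `arctanh y = ½ log((1+y)/(1-y))`. -/
noncomputable def arctanh (y : ℝ) : ℝ := Real.log ((1 + y) / (1 - y)) / 2

/-!
Put `e = (3 - p) / (p - 1)`, so that `-2 / (p - 1) = -(e + 1)` and `p < 5` means `-1/2 < e`.
The substitution `u = coth (c x + b)` turns `∫₀^∞ sinh (c x + b) ^ (-2 (e + 1)) dx` into
`Φ (coth b) / c` with `Φ s = ∫₁^s (u² - 1)^e du`, and `coth b_ω = √(ℓ / ω) =: s`. Hence
`m ω = D · s^(-(2e+1)) Φ s` with `D > 0` independent of `ω`.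

Differentiating `(u² - 1)^(e+1) / u` gives `(2e+1) Φ s < s Φ' s`, i.e. `s^(-(2e+1)) Φ s` is strictly
increasing, so `m` is strictly decreasing. The same inequality reads
`(2e+1) s^(-(2e+1)) Φ s < (1 - s⁻²)^e`, whose right side tends to `1` as `s → ∞`; with monotonicity
this gives `m < D / (2e+1)`. Finally `Φ s → 0` as `s → 1⁺`, i.e. as `ω → ℓ⁻`.
-/

open Real Set Filter Topology intervalIntegral

namespace Real

noncomputable def coth (t : ℝ) : ℝ := cosh t / sinh t

lemma coth_eq_inv_tanh (t : ℝ) : coth t = (tanh t)⁻¹ := by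
  rw [coth, tanh_eq_sinh_div_cosh, inv_div]

lemma one_lt_coth {t : ℝ} (ht : 0 < t) : 1 < coth t := by
  rw [coth, one_lt_div (sinh_pos_iff.2 ht)]
  exact sinh_lt_cosh t

lemma coth_sq_sub_one {t : ℝ} (ht : t ≠ 0) : coth t ^ 2 - 1 = (sinh t ^ 2)⁻¹ := by
  have hs : sinh t ≠ 0 := sinh_ne_zero.2 ht
  rw [coth]
  field_simp
  linear_combination cosh_sq_sub_sinh_sq t

lemma hasDerivAt_coth {t : ℝ} (ht : t ≠ 0) : HasDerivAt coth (-(sinh t ^ 2)⁻¹) t := by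
  have hs : sinh t ≠ 0 := sinh_ne_zero.2 ht
  refine ((hasDerivAt_cosh t).div (hasDerivAt_sinh t) hs).congr_deriv ?_
  field_simp
  linear_combination -(cosh_sq_sub_sinh_sq t)

lemma tendsto_coth_atTop : Tendsto coth atTop (𝓝 1) := by
  have hsinh : Tendsto sinh atTop atTop :=
    (tendsto_exp_atTop.atTop_add (tendsto_exp_neg_atTop_nhds_zero.neg)).atTop_div_const
      two_pos |>.congr fun t => (sinh_eq t).symm
  have h := (tendsto_exp_neg_atTop_nhds_zero.mul hsinh.inv_tendsto_atTop).const_add 1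
  rw [mul_zero, add_zero] at h
  refine h.congr' ?_
  filter_upwards [eventually_gt_atTop 0] with t ht
  have hs : sinh t ≠ 0 := (sinh_pos_iff.2 ht).ne'
  rw [coth, Pi.inv_apply, ← cosh_sub_sinh t]
  field_simp
  ring

lemma coth_artanh {y : ℝ} (hy : y ∈ Ioo (-1) 1) : coth (artanh y) = y⁻¹ := by
  rw [coth_eq_inv_tanh, tanh_artanh hy]

end Real

lemma arctanh_eq_artanh {y : ℝ} (hy : y ∈ Icc (-1) 1) : arctanh y = artanh y := by
  rw [artanh_eq_half_log hy, arctanh]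
  ring

lemma one_lt_sqrt_div {ω ℓ : ℝ} (hω : 0 < ω) (h : ω < ℓ) : 1 < √(ℓ / ω) :=
  (lt_sqrt zero_le_one).2 (by rw [one_pow, one_lt_div hω]; exact h)

lemma tendsto_sqrt_div_nhdsLT {ℓ : ℝ} (hℓ : 0 < ℓ) :
    Tendsto (fun ω => √(ℓ / ω)) (𝓝[<] ℓ) (𝓝[>] 1) := by
  refine tendsto_nhdsWithin_iff.2 ⟨?_, Filter.mem_of_superset (Ioo_mem_nhdsLT hℓ)
    fun ω hω => one_lt_sqrt_div hω.1 hω.2⟩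
  have hcont : ContinuousAt (fun ω => √(ℓ / ω)) ℓ := by fun_prop (disch := exact hℓ.ne')
  simpa [div_self hℓ.ne'] using hcont.tendsto.mono_left nhdsWithin_le_nhds

namespace StarGraph

noncomputable def Phi (e s : ℝ) : ℝ := ∫ u in (1:ℝ)..s, (u ^ 2 - 1) ^ e

variable {e : ℝ}

lemma sq_sub_one_rpow_pos (e : ℝ) {u : ℝ} (hu : 1 < u) : 0 < (u ^ 2 - 1) ^ e :=
  rpow_pos_of_pos (by nlinarith) e

lemma continuousOn_sq_sub_one_rpow (e : ℝ) :
    ContinuousOn (fun u : ℝ => (u ^ 2 - 1) ^ e) (Ioi 1) := fun u (hu : 1 < u) =>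
  ((by fun_prop : Continuous fun u : ℝ => u ^ 2 - 1).continuousAt.rpow_const
    (Or.inl (by nlinarith))).continuousWithinAt

lemma intervalIntegrable_sq_sub_one_rpow (he : -1 < e) {a b : ℝ} (ha : 1 ≤ a) (hb : 1 ≤ b) :
    IntervalIntegrable (fun u : ℝ => (u ^ 2 - 1) ^ e) volume a b := by
  have hab : ∀ u ∈ uIcc a b, 1 ≤ u := fun u hu => (le_min ha hb).trans hu.1
  have hfac : IntervalIntegrable (fun u : ℝ => (u - 1) ^ e * (u + 1) ^ e) volume a b := by
    have hshift := (intervalIntegrable_rpow' he (a := a - 1) (b := b - 1)).comp_sub_right 1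
    rw [sub_add_cancel, sub_add_cancel] at hshift
    refine hshift.mul_continuousOn ?_
    exact fun u hu => ((continuous_add_const 1).continuousAt.rpow_const
      (Or.inl (by linarith [hab u hu]))).continuousWithinAt
  refine hfac.congr fun u hu => ?_
  have hu : 1 ≤ u := hab u (uIoc_subset_uIcc hu)
  rw [← mul_rpow (by linarith) (by linarith)]
  ring_nf

lemma Phi_pos (he : -1 < e) {s : ℝ} (hs : 1 < s) : 0 < Phi e s :=
  intervalIntegral_pos_of_pos_on (intervalIntegrable_sq_sub_one_rpow he le_rfl hs.le)
    (fun _ hu => sq_sub_one_rpow_pos e hu.1) hs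

lemma hasDerivAt_Phi (he : -1 < e) {s : ℝ} (hs : 1 < s) :
    HasDerivAt (Phi e) ((s ^ 2 - 1) ^ e) s :=
  integral_hasDerivAt_right (intervalIntegrable_sq_sub_one_rpow he le_rfl hs.le)
    ((continuousOn_sq_sub_one_rpow e).stronglyMeasurableAtFilter isOpen_Ioi s hs)
    ((continuousOn_sq_sub_one_rpow e).continuousAt (Ioi_mem_nhds hs))

lemma tendsto_Phi_nhdsGT_one (he : -1 < e) : Tendsto (Phi e) (𝓝[>] 1) (𝓝 0) := by
  have hcont := continuousOn_primitive_interval'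
    (intervalIntegrable_sq_sub_one_rpow he le_rfl one_le_two) left_mem_uIcc 1 left_mem_uIcc
  rw [uIcc_of_le one_le_two] at hcont
  have h := (hcont.mono_of_mem_nhdsWithin (Icc_mem_nhdsGT one_lt_two)).tendsto
  rwa [integral_same] at h

lemma intervalIntegrable_sq_sub_one_rpow_div_sq (he : -1 < e) {s : ℝ} (hs : 1 ≤ s) :
    IntervalIntegrable (fun u : ℝ => (u ^ 2 - 1) ^ e / u ^ 2) volume 1 s :=
  ((intervalIntegrable_sq_sub_one_rpow he le_rfl hs).mul_continuousOn
    (g := fun u : ℝ => (u ^ 2)⁻¹) (ContinuousOn.inv₀ (by fun_prop) fun u hu => by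
      rw [uIcc_of_le hs] at hu
      have := hu.1
      positivity)).congr fun u _ => (div_eq_mul_inv _ _).symm

lemma hasDerivAt_sq_sub_one_rpow_add_one_div {u : ℝ} (hu : 1 < u) :
    HasDerivAt (fun u : ℝ => (u ^ 2 - 1) ^ (e + 1) / u)
      ((2 * e + 1) * (u ^ 2 - 1) ^ e + (u ^ 2 - 1) ^ e / u ^ 2) u := by
  have hu0 : u ≠ 0 := by positivity
  have hb : u ^ 2 - 1 ≠ 0 := by nlinarith
  refine ((((hasDerivAt_pow 2 u).sub_const 1).rpow_const (p := e + 1) (Or.inl hb)).div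
    (hasDerivAt_id' u) hu0).congr_deriv ?_
  rw [add_sub_cancel_right, rpow_add_one hb]
  field_simp
  ring

lemma mul_Phi_add_integral_div_sq (he : -1 < e) {s : ℝ} (hs : 1 < s) :
    (2 * e + 1) * Phi e s + ∫ u in (1:ℝ)..s, (u ^ 2 - 1) ^ e / u ^ 2 =
      (s ^ 2 - 1) ^ (e + 1) / s := by
  have hψ := (intervalIntegrable_sq_sub_one_rpow he le_rfl hs.le).const_mul (2 * e + 1)
  have hψu := intervalIntegrable_sq_sub_one_rpow_div_sq he hs.le
  have hcont : ContinuousOn (fun u : ℝ => (u ^ 2 - 1) ^ (e + 1) / u) (Icc 1 s) :=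
    ((by fun_prop : Continuous fun u : ℝ => u ^ 2 - 1).continuousOn.rpow_const
      fun _ _ => Or.inr (by linarith)).div continuousOn_id fun u hu => by linarith [hu.1]
  rw [Phi, ← intervalIntegral.integral_const_mul, ← integral_add hψ hψu,
    integral_eq_sub_of_hasDeriv_right_of_le hs.le hcont
      (fun u hu => (hasDerivAt_sq_sub_one_rpow_add_one_div hu.1).hasDerivWithinAt) (hψ.add hψu)]
  simp [zero_rpow (by linarith : e + 1 ≠ 0)]

lemma mul_Phi_lt (he : -1 < e) {s : ℝ} (hs : 1 < s) :
    (2 * e + 1) * Phi e s < s * (s ^ 2 - 1) ^ e := by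
  have hrem : 0 < ∫ u in (1:ℝ)..s, (u ^ 2 - 1) ^ e / u ^ 2 :=
    intervalIntegral_pos_of_pos_on (intervalIntegrable_sq_sub_one_rpow_div_sq he hs.le)
      (fun u hu => div_pos (sq_sub_one_rpow_pos e hu.1) (by have := hu.1; positivity)) hs
  have hend : (s ^ 2 - 1) ^ (e + 1) / s < s * (s ^ 2 - 1) ^ e := by
    have hb : 0 < s ^ 2 - 1 := by nlinarith
    rw [rpow_add_one hb.ne', div_lt_iff₀ (by positivity)]
    nlinarith [sq_sub_one_rpow_pos e hs]
  linarith [mul_Phi_add_integral_div_sq he hs]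

noncomputable def scaledPhi (e s : ℝ) : ℝ := s ^ (-(2 * e + 1)) * Phi e s

lemma scaledPhi_pos (he : -1 < e) {s : ℝ} (hs : 1 < s) : 0 < scaledPhi e s :=
  mul_pos (rpow_pos_of_pos (by linarith) _) (Phi_pos he hs)

lemma hasDerivAt_scaledPhi (he : -1 < e) {s : ℝ} (hs : 1 < s) :
    HasDerivAt (scaledPhi e)
      (s ^ (-(2 * e + 1) - 1) * (s * (s ^ 2 - 1) ^ e - (2 * e + 1) * Phi e s)) s := by
  have hs0 : s ≠ 0 := by positivity
  refine ((hasDerivAt_rpow_const (p := -(2 * e + 1)) (Or.inl hs0)).mul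
    (hasDerivAt_Phi he hs)).congr_deriv ?_
  rw [show s ^ (-(2 * e + 1)) = s ^ (-(2 * e + 1) - 1) * s by
    rw [← rpow_add_one hs0, sub_add_cancel]]
  ring

lemma strictMonoOn_scaledPhi (he : -1 < e) : StrictMonoOn (scaledPhi e) (Ioi 1) := by
  refine strictMonoOn_of_deriv_pos (convex_Ioi 1)
    (fun s hs => (hasDerivAt_scaledPhi he hs).continuousAt.continuousWithinAt) fun s hs => ?_
  rw [interior_Ioi] at hs
  rw [(hasDerivAt_scaledPhi he hs).deriv]
  exact mul_pos (rpow_pos_of_pos (by linarith [hs.out]) _) (sub_pos.2 (mul_Phi_lt he hs))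

lemma mul_scaledPhi_lt (he : -1 < e) {s : ℝ} (hs : 1 < s) :
    (2 * e + 1) * scaledPhi e s < (1 - (s ^ 2)⁻¹) ^ e := by
  have hs0 : 0 < s := by linarith
  have hs2 : (0 : ℝ) < s ^ 2 := by positivity
  have hscale : s ^ (-(2 * e + 1)) * s = ((s ^ 2) ^ e)⁻¹ := by
    rw [← rpow_add_one hs0.ne', ← rpow_natCast, ← rpow_mul hs0.le, ← rpow_neg hs0.le]
    congr 1
    push_cast
    ring
  calc (2 * e + 1) * scaledPhi e s
      = s ^ (-(2 * e + 1)) * ((2 * e + 1) * Phi e s) := by rw [scaledPhi]; ring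
    _ < s ^ (-(2 * e + 1)) * (s * (s ^ 2 - 1) ^ e) :=
        mul_lt_mul_of_pos_left (mul_Phi_lt he hs) (rpow_pos_of_pos hs0 _)
    _ = (1 - (s ^ 2)⁻¹) ^ e := by
        rw [← mul_assoc, hscale, show 1 - (s ^ 2)⁻¹ = (s ^ 2 - 1) / s ^ 2 by field_simp,
          div_rpow (by nlinarith) hs2.le, div_eq_inv_mul]

lemma scaledPhi_lt (he : -1 / 2 < e) {s : ℝ} (hs : 1 < s) : scaledPhi e s < (2 * e + 1)⁻¹ := by
  have he1 : -1 < e := by linarith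
  have hpos : 0 < 2 * e + 1 := by linarith
  have hs1 : s + 1 ∈ Ioi (1 : ℝ) := by simp only [mem_Ioi]; linarith
  have hlim : Tendsto (fun t : ℝ => (1 - (t ^ 2)⁻¹) ^ e / (2 * e + 1)) atTop
      (𝓝 (2 * e + 1)⁻¹) := by
    have h := ((tendsto_inv_atTop_zero.comp (tendsto_pow_atTop two_ne_zero)).const_sub
      (1 : ℝ)).rpow_const (p := e) (Or.inl (by norm_num))
    rw [sub_zero, one_rpow] at h
    simpa only [one_div, Function.comp_apply] using h.div_const (2 * e + 1)
  have hbound : scaledPhi e (s + 1) ≤ (2 * e + 1)⁻¹ := by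
    refine ge_of_tendsto hlim ?_
    filter_upwards [eventually_gt_atTop (s + 1)] with t ht
    have ht1 : 1 < t := hs1.out.trans ht
    rw [le_div_iff₀ hpos, mul_comm]
    exact (mul_lt_mul_of_pos_left (strictMonoOn_scaledPhi he1 hs1 ht1 ht) hpos).trans
      (mul_scaledPhi_lt he1 ht1) |>.le
  exact (strictMonoOn_scaledPhi he1 hs hs1 (lt_add_one s)).trans_le hbound

lemma tendsto_scaledPhi_nhdsGT_one (he : -1 < e) :
    Tendsto (scaledPhi e) (𝓝[>] 1) (𝓝 0) := by
  have h := ((continuousAt_rpow_const 1 (-(2 * e + 1)) (Or.inl one_ne_zero)).tendsto.mono_left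
    nhdsWithin_le_nhds).mul (tendsto_Phi_nhdsGT_one he)
  rwa [mul_zero] at h

lemma sq_sinh_rpow_neg {t : ℝ} (ht : 0 < t) :
    (sinh t ^ (-(e + 1))) ^ 2 = (coth t ^ 2 - 1) ^ e * (sinh t ^ 2)⁻¹ := by
  have hS : 0 < sinh t ^ 2 := by have := sinh_pos_iff.2 ht; positivity
  rw [coth_sq_sub_one ht.ne', rpow_pow_comm (sinh_pos_iff.2 ht).le, inv_rpow hS.le,
    ← rpow_neg hS.le, ← rpow_neg_one, ← rpow_add hS]
  ring_nf

lemma integral_Ioi_sq_sinh_rpow (he : -1 < e) {b c : ℝ} (hb : 0 < b) (hc : 0 < c) :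
    IntegrableOn (fun x => (sinh (c * x + b) ^ (-(e + 1))) ^ 2) (Ioi 0) ∧
      ∫ x in Ioi 0, (sinh (c * x + b) ^ (-(e + 1))) ^ 2 = Phi e (coth b) / c := by
  set H : ℝ → ℝ := fun x => -Phi e (coth (c * x + b)) / c
  have hpos : ∀ x ∈ Ici (0 : ℝ), 0 < c * x + b := fun x hx => by
    have : 0 ≤ x := hx
    positivity
  have hderiv : ∀ x ∈ Ici (0 : ℝ), HasDerivAt H ((sinh (c * x + b) ^ (-(e + 1))) ^ 2) x := by
    intro x hx
    have ht := hpos x hx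
    have hlin : HasDerivAt (fun x => c * x + b) c x := by
      simpa using ((hasDerivAt_id x).const_mul c).add_const b
    refine ((((hasDerivAt_Phi he (one_lt_coth ht)).comp x
      ((hasDerivAt_coth ht.ne').comp x hlin)).neg).div_const c).congr_deriv ?_
    rw [sq_sinh_rpow_neg ht]
    field_simp
  have hlimit : Tendsto H atTop (𝓝 0) := by
    have hcoth : Tendsto (fun x => coth (c * x + b)) atTop (𝓝[>] 1) :=
      tendsto_nhdsWithin_iff.2 ⟨tendsto_coth_atTop.comp
        (tendsto_atTop_add_const_right _ b (tendsto_id.const_mul_atTop hc)),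
        (eventually_ge_atTop 0).mono fun x hx => one_lt_coth (hpos x hx)⟩
    simpa using ((tendsto_Phi_nhdsGT_one he).comp hcoth).neg.div_const c
  have hnonneg : ∀ x ∈ Ioi (0 : ℝ), 0 ≤ (sinh (c * x + b) ^ (-(e + 1))) ^ 2 :=
    fun _ _ => sq_nonneg _
  refine ⟨integrableOn_Ioi_deriv_of_nonneg' hderiv hnonneg hlimit, ?_⟩
  rw [integral_Ioi_of_hasDerivAt_of_nonneg' hderiv hnonneg hlimit]
  simp [H, neg_div]

lemma integral_Ioi_groundState_sq {p ω ℓ : ℝ} (hp : 1 < p) (hpe : (p - 1) * (e + 1) = 2)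
    (hω : 0 < ω) (hωℓ : ω < ℓ) :
    IntegrableOn (fun x => (((p + 1) * ω / 2) ^ (1 / (p - 1)) *
        (sinh ((p - 1) * √ω / 2 * x + arctanh √(ω / ℓ))) ^ (-2 / (p - 1))) ^ 2) (Ioi 0) ∧
      ∫ x in Ioi 0, (((p + 1) * ω / 2) ^ (1 / (p - 1)) *
        (sinh ((p - 1) * √ω / 2 * x + arctanh √(ω / ℓ))) ^ (-2 / (p - 1))) ^ 2 =
      ((p + 1) / 2) ^ (e + 1) * (2 / (p - 1)) * ℓ ^ (e + 1 / 2) * scaledPhi e √(ℓ / ω) := by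
  have hp0 : 0 < p - 1 := by linarith
  have hℓ : 0 < ℓ := hω.trans hωℓ
  have hy : √(ω / ℓ) ∈ Ioo 0 1 :=
    ⟨sqrt_pos.2 (div_pos hω hℓ), (sqrt_lt' one_pos).2 (by rw [one_pow, div_lt_one hℓ]; exact hωℓ)⟩
  have hb : 0 < arctanh √(ω / ℓ) := by
    rw [arctanh_eq_artanh ⟨by linarith [hy.1], hy.2.le⟩]
    exact artanh_pos hy
  have hcoth : coth (arctanh √(ω / ℓ)) = √(ℓ / ω) := by
    rw [arctanh_eq_artanh ⟨by linarith [hy.1], hy.2.le⟩, coth_artanh ⟨by linarith [hy.1], hy.2⟩,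
      ← sqrt_inv, inv_div]
  have hexp : -2 / (p - 1) = -(e + 1) := by
    rw [neg_div, ← hpe, mul_div_cancel_left₀ _ hp0.ne']
  have he1 : -1 < e := by nlinarith
  have hA : (((p + 1) * ω / 2) ^ (1 / (p - 1))) ^ 2 = ((p + 1) / 2) ^ (e + 1) * ω ^ (e + 1) := by
    have h2 : 1 / (p - 1) * (2 : ℕ) = e + 1 := by
      push_cast
      field_simp
      linarith
    rw [← rpow_natCast, ← rpow_mul (by positivity), h2, mul_div_right_comm,
      mul_rpow (by positivity) hω.le]
  have hωpow : ω ^ (e + 1) / √ω = ℓ ^ (e + 1 / 2) * √(ℓ / ω) ^ (-(2 * e + 1)) := by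
    rw [sqrt_eq_rpow, sqrt_eq_rpow, ← rpow_sub hω, ← rpow_mul (div_pos hℓ hω).le,
      div_rpow hℓ.le hω.le, show 1 / 2 * -(2 * e + 1) = -(e + 1 / 2) by ring,
      show e + 1 - 1 / 2 = e + 1 / 2 by ring, rpow_neg hℓ.le, rpow_neg hω.le]
    have : 0 < ℓ ^ (e + 1 / 2) := rpow_pos_of_pos hℓ _
    field_simp
  obtain ⟨hint, hval⟩ := integral_Ioi_sq_sinh_rpow he1 hb
    (by positivity : 0 < (p - 1) * √ω / 2)
  simp_rw [hexp, mul_pow]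
  refine ⟨hint.const_mul _, ?_⟩
  rw [MeasureTheory.integral_const_mul, hval, hcoth, scaledPhi, hA, ← mul_assoc _ (_ ^ _),
    mul_assoc _ (ℓ ^ _), ← hωpow]
  have : 0 < √ω := sqrt_pos.2 hω
  field_simp

end StarGraph

open StarGraph in
/-- Subcritical mass of the ground-state branch: for `1 < p < 5`, the squared `L²` norm
`m(ω)` of the explicit ground state on the star graph is finite, positive, bounded above
by some `μ < ∞`, strictly decreasing on `(0, ℓ)` with `ℓ = γ²/K²`, and tends to `0` as
`ω → ℓ⁻`. -/
theorem subcritical_mass_branch (K : ℕ) (hK : 1 ≤ K) (γ p : ℝ)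
    (hγ : γ < 0) (hp1 : 1 < p) (hp5 : p < 5)
    (ℓ : ℝ) (hℓ : ℓ = γ ^ 2 / (K : ℝ) ^ 2)
    (m : ℝ → ℝ)
    (hm : ∀ ω ∈ Set.Ioo (0:ℝ) ℓ, m ω = (K : ℝ) *
      ∫ x in Set.Ioi (0:ℝ),
        (((p + 1) * ω / 2) ^ (1 / (p - 1)) *
          (Real.sinh ((p - 1) * Real.sqrt ω / 2 * x +
            arctanh (Real.sqrt (ω / ℓ)))) ^ (-2 / (p - 1))) ^ 2) :
    (∀ ω ∈ Set.Ioo (0:ℝ) ℓ,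
      IntegrableOn (fun x =>
        (((p + 1) * ω / 2) ^ (1 / (p - 1)) *
          (Real.sinh ((p - 1) * Real.sqrt ω / 2 * x +
            arctanh (Real.sqrt (ω / ℓ)))) ^ (-2 / (p - 1))) ^ 2) (Set.Ioi 0) ∧
      0 < m ω) ∧
    (∃ μ : ℝ, ∀ ω ∈ Set.Ioo (0:ℝ) ℓ, m ω < μ) ∧
    StrictAntiOn m (Set.Ioo 0 ℓ) ∧
    Filter.Tendsto m (nhdsWithin ℓ (Set.Iio ℓ)) (nhds 0) := by
  set e : ℝ := (3 - p) / (p - 1)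
  have hpe : (p - 1) * (e + 1) = 2 := by
    have : p - 1 ≠ 0 := by linarith
    simp only [e]
    field_simp
    ring
  have he : -1 / 2 < e := by rw [lt_div_iff₀ (by linarith)]; linarith
  have hℓ0 : 0 < ℓ := by
    have := hγ.ne
    rw [hℓ]
    positivity
  set D : ℝ := K * (((p + 1) / 2) ^ (e + 1) * (2 / (p - 1)) * ℓ ^ (e + 1 / 2))
  have hD : 0 < D := by
    have : (0 : ℝ) < K := by exact_mod_cast hK
    have : 0 < p - 1 := by linarith
    positivity
  have hmass : ∀ ω ∈ Ioo 0 ℓ, _ ∧ m ω = D * scaledPhi e √(ℓ / ω) := fun ω hω => by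
    obtain ⟨hint, hval⟩ := integral_Ioi_groundState_sq hp1 hpe hω.1 hω.2
    exact ⟨hint, by rw [hm ω hω, hval]; ring⟩
  have hs : ∀ ω ∈ Ioo 0 ℓ, 1 < √(ℓ / ω) := fun ω hω => one_lt_sqrt_div hω.1 hω.2
  refine ⟨fun ω hω => ⟨(hmass ω hω).1, ?_⟩, ⟨D * (2 * e + 1)⁻¹, fun ω hω => ?_⟩,
    fun ω₁ h₁ ω₂ h₂ h => ?_, ?_⟩
  · rw [(hmass ω hω).2]
    exact mul_pos hD (scaledPhi_pos (by linarith) (hs ω hω))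
  · rw [(hmass ω hω).2]
    exact mul_lt_mul_of_pos_left (scaledPhi_lt he (hs ω hω)) hD
  · rw [(hmass ω₁ h₁).2, (hmass ω₂ h₂).2]
    refine mul_lt_mul_of_pos_left
      (strictMonoOn_scaledPhi (by linarith) (hs ω₂ h₂) (hs ω₁ h₁) ?_) hD
    exact sqrt_lt_sqrt (div_pos hℓ0 h₂.1).le (div_lt_div_of_pos_left hℓ0 h₁.1 h)
  · have h := ((tendsto_scaledPhi_nhdsGT_one (e := e) (by linarith)).comp
      (tendsto_sqrt_div_nhdsLT hℓ0)).const_mul D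
    rw [mul_zero] at h
    exact h.congr' (Filter.mem_of_superset (Ioo_mem_nhdsLT hℓ0) fun ω hω => (hmass ω hω).2.symm)
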